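/- arXiv:1909.12166 — 2 statements merged into one kernel-verified Lean document; each statement's English description precedes it below -/
import Mathlib

section
/- Let f : (0,1] × (0,1] → ℝ be a function such that for all probability mass functions p_{XY} on a finite product space with marginals p_X, p_Y and all points (x,y) with positive joint mass, one has -log p_{XY}(x,y) ≥ f(p_X(x), p_Y(y)) ≥ max(-log p_X(x), -log p_Y(y)). Then f(a,b) = max(-log a, -log b) for all a, b ∈ (0,1]. -/
/-!
Among all joint distributions with marginals `a` and `b`, the one putting mass `min a b` on the
diagonal cell makes the upper bound `-log p_{XY}` coincide with the lower bound
`max (-log a) (-log b)`, which pins down `f a b`.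
-/

open Real

def maxOverlapCoupling (a b : ℝ) : Bool × Bool → ℝ
  | (true, true) => min a b
  | (true, false) => a - min a b
  | (false, true) => b - min a b
  | (false, false) => 1 - max a b

section maxOverlapCoupling

variable {a b : ℝ}

lemma maxOverlapCoupling_nonneg (ha₀ : 0 ≤ a) (hb₀ : 0 ≤ b) (ha₁ : a ≤ 1) (hb₁ : b ≤ 1)
    (z : Bool × Bool) :
    0 ≤ maxOverlapCoupling a b z := by
  rcases z with ⟨_ | _, _ | _⟩ <;> simp only [maxOverlapCoupling, sub_nonneg]
  · exact max_le ha₁ hb₁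
  · exact min_le_right a b
  · exact min_le_left a b
  · exact le_min ha₀ hb₀

lemma sum_maxOverlapCoupling : ∑ z, maxOverlapCoupling a b z = 1 := by
  simp only [Fintype.sum_prod_type, Fintype.sum_bool, maxOverlapCoupling]
  linarith [min_add_max a b]

lemma sum_maxOverlapCoupling_true_left : ∑ y, maxOverlapCoupling a b (true, y) = a := by
  simp [maxOverlapCoupling]

lemma sum_maxOverlapCoupling_true_right : ∑ x, maxOverlapCoupling a b (x, true) = b := by
  simp [maxOverlapCoupling]

end maxOverlapCoupling

lemma neg_log_min {a b : ℝ} (ha : 0 < a) (hb : 0 < b) :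
    -log (min a b) = max (-log a) (-log b) := by
  rcases le_total a b with h | h
  · rw [min_eq_left h, max_eq_left (neg_le_neg (log_le_log ha h))]
  · rw [min_eq_right h, max_eq_right (neg_le_neg (log_le_log hb h))]

theorem stmt_1 (f : ℝ → ℝ → ℝ)
    (hf : ∀ (α β : Type) [Fintype α] [Fintype β] (p : α × β → ℝ),
      (∀ z, 0 ≤ p z) → (∑ z, p z) = 1 →
      ∀ x y, 0 < p (x, y) →
        -Real.log (p (x, y)) ≥ f (∑ b, p (x, b)) (∑ a, p (a, y)) ∧
        f (∑ b, p (x, b)) (∑ a, p (a, y)) ≥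
          max (-Real.log (∑ b, p (x, b))) (-Real.log (∑ a, p (a, y)))) :
    ∀ a b : ℝ, a ∈ Set.Ioc (0 : ℝ) 1 → b ∈ Set.Ioc (0 : ℝ) 1 →
      f a b = max (-Real.log a) (-Real.log b) := by
  rintro a b ⟨ha0, ha1⟩ ⟨hb0, hb1⟩
  obtain ⟨hupper, hlower⟩ := hf Bool Bool (maxOverlapCoupling a b)
    (maxOverlapCoupling_nonneg ha0.le hb0.le ha1 hb1) sum_maxOverlapCoupling true true
    (lt_min ha0 hb0)
  rw [sum_maxOverlapCoupling_true_left, sum_maxOverlapCoupling_true_right] at hupper hlower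
  have hdiag : -log (maxOverlapCoupling a b (true, true)) = max (-log a) (-log b) :=
    neg_log_min ha0 hb0
  exact le_antisymm (hdiag ▸ hupper) hlower
end

section
/- For any finite nonempty family of reals h : X → ℝ with |X| = n, the dual maximum-minimum identity holds: max over i in X of h(i) = Σ_{k=1}^{n} (-1)^{k-1} Σ_{S ⊆ X, |S| = k} min over i in S of h(i). -/
open Finset

lemma inf'_min_aux {ι : Type*} (c : ℝ) (s : Finset ι) (hs : s.Nonempty) (h : ι → ℝ) :
    s.inf' hs (fun i => min c (h i)) = min c (s.inf' hs h) := by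
  induction hs using Finset.Nonempty.cons_induction with
  | singleton a => simp
  | cons a s ha hs ih =>
      rw [Finset.inf'_cons (H := hs), Finset.inf'_cons (H := hs), ih]
      have := inf_inf_distrib_left c (h a) (s.inf' hs h)
      exact this.symm

lemma sup'_min_aux {ι : Type*} (c : ℝ) (s : Finset ι) (hs : s.Nonempty) (h : ι → ℝ) :
    s.sup' hs (fun i => min c (h i)) = min c (s.sup' hs h) := by
  induction hs using Finset.Nonempty.cons_induction with
  | singleton a => simp
  | cons a s ha hs ih =>
      rw [Finset.sup'_cons (H := hs), Finset.sup'_cons (H := hs), ih]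
      have := min_max_distrib_left c (h a) (s.sup' hs h)
      exact this.symm

lemma key_aux {ι : Type*} [DecidableEq ι] (X : Finset ι) (hX : X.Nonempty) :
    ∀ h : ι → ℝ, X.sup' hX h =
      ∑ S ∈ X.powerset, (-1 : ℝ) ^ (S.card - 1) *
        (if hS : S.Nonempty then S.inf' hS h else 0) := by
  induction hX using Finset.Nonempty.cons_induction with
  | singleton a =>
      intro h
      have hp : ({a} : Finset ι).powerset = {∅, {a}} := by
        ext t; simp [Finset.mem_powerset, Finset.subset_singleton_iff]
      rw [hp, Finset.sum_pair (Finset.singleton_ne_empty a).symm]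
      simp
  | cons a s ha hs ih =>
      intro h
      rw [Finset.sup'_cons (H := hs),
        Finset.sum_powerset_cons ha
          (fun S => (-1 : ℝ) ^ (S.card - 1) * (if hS : S.Nonempty then S.inf' hS h else 0))]
      set g : Finset ι → ℝ := fun T => (-1 : ℝ) ^ T.card *
        (if hT : T.Nonempty then T.inf' hT (fun i => min (h a) (h i)) else h a) with hg
      have hterm : ∀ T ∈ s.powerset.attach,
          (fun S => (-1 : ℝ) ^ (S.card - 1) *
              (if hS : S.Nonempty then S.inf' hS h else 0))
            (Finset.cons a T.1 (notMem_mono (mem_powerset.1 T.2) ha))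
          = g T.1 := by
        intro T _
        have haT : a ∉ T.1 := notMem_mono (mem_powerset.1 T.2) ha
        simp only [hg]
        rw [Finset.card_cons]
        simp only [Nat.add_sub_cancel]
        congr 1
        rw [dif_pos (Finset.cons_nonempty haT)]
        by_cases hT0 : T.1.Nonempty
        · rw [dif_pos hT0, Finset.inf'_cons (H := hT0), inf'_min_aux]
        · rw [dif_neg hT0]
          rw [Finset.not_nonempty_iff_eq_empty] at hT0
          apply le_antisymm
          · exact Finset.inf'_le _ (Finset.mem_cons_self a T.1)
          · apply Finset.le_inf'
            intro b hb
            rw [Finset.mem_cons, hT0] at hb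
            simp only [Finset.notMem_empty, or_false] at hb
            rw [hb]
      rw [Finset.sum_congr rfl hterm, Finset.sum_attach s.powerset g]
      have hsplit : ∑ T ∈ s.powerset, g T
          = h a - s.sup' hs (fun i => min (h a) (h i)) := by
        have he : s.powerset = insert ∅ (s.powerset.erase ∅) :=
          (Finset.insert_erase (Finset.empty_mem_powerset s)).symm
        rw [he, Finset.sum_insert (Finset.notMem_erase _ _)]
        have h2 : ∑ T ∈ s.powerset.erase ∅, g T
            = - ∑ T ∈ s.powerset.erase ∅, (-1 : ℝ) ^ (T.card - 1) *
              (if hS : T.Nonempty then T.inf' hS (fun i => min (h a) (h i)) else 0) := by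
          rw [← Finset.sum_neg_distrib]
          apply Finset.sum_congr rfl
          intro T hT
          have hT0 : T.Nonempty :=
            Finset.nonempty_iff_ne_empty.mpr (Finset.ne_of_mem_erase hT)
          simp only [hg]
          rw [dif_pos hT0, dif_pos hT0]
          have hc : T.card ≠ 0 := by
            simp [Finset.card_eq_zero, ← Finset.nonempty_iff_ne_empty, hT0]
          have hpow : (-1 : ℝ) ^ T.card = -(-1 : ℝ) ^ (T.card - 1) := by
            conv_lhs => rw [show T.card = (T.card - 1) + 1 by omega]
            rw [pow_succ]; ring
          rw [hpow]; ring
        rw [h2]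
        have h3 : ∑ T ∈ s.powerset.erase ∅, (-1 : ℝ) ^ (T.card - 1) *
              (if hS : T.Nonempty then T.inf' hS (fun i => min (h a) (h i)) else 0)
            = ∑ T ∈ s.powerset, (-1 : ℝ) ^ (T.card - 1) *
              (if hS : T.Nonempty then T.inf' hS (fun i => min (h a) (h i)) else 0) := by
          rw [he, Finset.sum_insert (Finset.notMem_erase _ _)]
          simp
        rw [h3, ← ih (fun i => min (h a) (h i))]
        simp only [hg]
        rw [dif_neg Finset.not_nonempty_empty]
        simp only [Finset.card_empty, pow_zero]
        ring
      rw [hsplit, ← ih h, sup'_min_aux]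
      have := min_add_max (h a) (s.sup' hs h)
      linarith

theorem stmt_11 {ι : Type*} [DecidableEq ι] (X : Finset ι) (hX : X.Nonempty)
    (h : ι → ℝ) :
    X.sup' hX h =
      ∑ k ∈ (Finset.Icc 1 X.card).attach,
        (-1 : ℝ) ^ (k.1 - 1) *
          ∑ S ∈ (X.powerset.filter fun S => S.card = k.1).attach,
            S.1.inf' (Finset.card_pos.mp (by
              have hc := (Finset.mem_filter.mp S.2).2
              have hk := (Finset.mem_Icc.mp k.2).1
              omega)) h := by
  classical
  set f : Finset ι → ℝ :=
    fun S => (-1 : ℝ) ^ (S.card - 1) * (if hS : S.Nonempty then S.inf' hS h else 0) with hf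
  have step1 : ∀ k ∈ Finset.Icc 1 X.card,
      ((-1 : ℝ) ^ (k - 1) *
        ∑ S ∈ (X.powerset.filter fun S => S.card = k).attach,
          (if hS : S.1.Nonempty then S.1.inf' hS h else 0))
      = ∑ S ∈ X.powerset.filter (fun S => S.card = k), f S := by
    intro k hk
    rw [Finset.sum_attach (X.powerset.filter fun S => S.card = k)
        (fun S => if hS : S.Nonempty then S.inf' hS h else 0),
      Finset.mul_sum]
    apply Finset.sum_congr rfl
    intro S hS
    have hcard : S.card = k := (Finset.mem_filter.mp hS).2
    rw [hf]
    simp only [hcard]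
  have step0 : (∑ k ∈ (Finset.Icc 1 X.card).attach,
        (-1 : ℝ) ^ (k.1 - 1) *
          ∑ S ∈ (X.powerset.filter fun S => S.card = k.1).attach,
            S.1.inf' (Finset.card_pos.mp (by
              have hc := (Finset.mem_filter.mp S.2).2
              have hk := (Finset.mem_Icc.mp k.2).1
              omega)) h)
      = ∑ k ∈ (Finset.Icc 1 X.card).attach,
        (-1 : ℝ) ^ (k.1 - 1) *
          ∑ S ∈ (X.powerset.filter fun S => S.card = k.1).attach,
            (if hS : S.1.Nonempty then S.1.inf' hS h else 0) := by
    apply Finset.sum_congr rfl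
    intro k _
    congr 1
    apply Finset.sum_congr rfl
    intro S _
    rw [dif_pos]
  rw [step0,
    Finset.sum_attach (Finset.Icc 1 X.card) (fun k => (-1 : ℝ) ^ (k - 1) *
      ∑ S ∈ (X.powerset.filter fun S => S.card = k).attach,
        (if hS : S.1.Nonempty then S.1.inf' hS h else 0)),
    Finset.sum_congr rfl step1]
  have fib : ∑ k ∈ Finset.Icc 1 X.card,
      ∑ S ∈ X.powerset.filter (fun S => S.card = k), f S
      = ∑ S ∈ X.powerset.filter (fun S => S.Nonempty), f S := by
    rw [← Finset.sum_fiberwise_of_maps_to (g := Finset.card)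
      (t := Finset.Icc 1 X.card) ?_ f]
    · apply Finset.sum_congr rfl
      intro k hk
      apply Finset.sum_congr _ (fun _ _ => rfl)
      ext S
      simp only [Finset.mem_filter, Finset.mem_powerset]
      constructor
      · rintro ⟨hSX, hSk⟩
        exact ⟨⟨hSX, Finset.card_pos.mp (by
          have := (Finset.mem_Icc.mp hk).1; omega)⟩, hSk⟩
      · rintro ⟨⟨hSX, _⟩, hSk⟩
        exact ⟨hSX, hSk⟩
    · intro S hS
      rw [Finset.mem_filter, Finset.mem_powerset] at hS
      rw [Finset.mem_Icc]
      exact ⟨Finset.card_pos.mpr hS.2, Finset.card_le_card hS.1⟩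
  rw [fib]
  have ext0 : ∑ S ∈ X.powerset.filter (fun S => S.Nonempty), f S
      = ∑ S ∈ X.powerset, f S := by
    apply Finset.sum_subset (Finset.filter_subset _ _)
    intro S hS hS2
    rw [Finset.mem_filter, not_and] at hS2
    rw [hf]
    simp [dif_neg (hS2 hS)]
  rw [ext0, hf]
  exact key_aux X hX h
end
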